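/- Let L be a list of distinct keys and L' = a :: L with a not in L. For any pivot p < a occurring in both recursion trees, the input list to the recursive call on the left child of p is the same in Q(L) and Q(L'); symmetrically, for any pivot p > a, the input to the recursive call on the right child of p is the same in both trees. -/

import Mathlib

/-!
No key heads two calls of `Q(L)`: below a call with pivot `h`, the left subtree holds only keys
`< h` and the right subtree only keys `> h`. The subtrees of the root `a :: L` of `Q(a :: L)`
are `Q(L.filter (· < a))` and `Q(L.filter (a < ·))`, and filtering by an order-connected
predicate `P` commutes with Quicksort: every call of `Q(K.filter P)` is the `P`-filter of the
call of `Q(K)` with the same pivot. So for `p < a` the call of `p` in `Q(a :: L)` is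
`M.filter (· < a)`, where `M` is the call of `p` in `Q(L)`, and filtering its tail by `(· < p)`
forgets the filter by `(· < a)`.
-/

/-- The list of inputs to all recursive calls (nodes of the recursion tree)
of head-pivot Quicksort on `L`. -/
def calls : List ℤ → List (List ℤ)
  | [] => []
  | h :: t =>
      (h :: t) :: (calls (t.filter (· < h)) ++ calls (t.filter (h < ·)))
termination_by L => L.length
decreasing_by
  all_goals simp [Nat.lt_succ_iff, List.length_filter_le]
  all_goals exact (List.length_filter_le _ _).trans (by simp)

theorem Set.OrdConnected.subset_Iio_or_subset_Ioi {α : Type*} [LinearOrder α] {s : Set α}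
    (hs : s.OrdConnected) {h : α} (hh : h ∉ s) : s ⊆ Set.Iio h ∨ s ⊆ Set.Ioi h := by
  by_contra! hcon
  obtain ⟨⟨x, hx, hxh⟩, ⟨y, hy, hyh⟩⟩ := And.imp Set.not_subset.1 Set.not_subset.1 hcon
  exact hh (hs.out hy hx ⟨not_lt.1 hyh, not_lt.1 hxh⟩)

theorem List.filter_filter_of_imp {α : Type*} {p q : α → Bool} (l : List α)
    (hpq : ∀ x, p x → q x) : (l.filter q).filter p = l.filter p := by
  rw [List.filter_filter]
  exact List.filter_congr fun x _ => by cases hx : p x <;> simp [hx, hpq x]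

theorem List.filter_tail_filter_of_head?_eq {α : Type*} {p q : α → Bool} {l : List α} {a : α}
    (hl : l.head? = some a) (ha : q a) (hpq : ∀ x, p x → q x) :
    (l.filter q).tail.filter p = l.tail.filter p := by
  obtain ⟨t, rfl⟩ : ∃ t, l = a :: t := ⟨l.tail, List.eq_cons_of_mem_head? hl⟩
  rw [List.filter_cons_of_pos ha, List.tail_cons, List.tail_cons,
    List.filter_filter_of_imp _ hpq]

@[elab_as_elim]
theorem quicksort_induction {motive : List ℤ → Prop} (nil : motive [])
    (cons : ∀ h t, motive (t.filter (· < h)) → motive (t.filter (h < ·)) →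
      motive (h :: t)) :
    ∀ L, motive L
  | [] => nil
  | h :: t =>
    cons h t (quicksort_induction nil cons _) (quicksort_induction nil cons _)
termination_by L => L.length
decreasing_by all_goals exact Nat.lt_succ_of_le (List.length_filter_le _ _)

theorem not_mem_calls_nil (M : List ℤ) : M ∉ calls [] := by
  simp [calls]

theorem mem_calls_cons {M t : List ℤ} {h : ℤ} :
    M ∈ calls (h :: t) ↔
      M = h :: t ∨ M ∈ calls (t.filter (· < h)) ∨ M ∈ calls (t.filter (h < ·)) := by
  rw [calls]; simp

theorem subset_of_mem_calls {L M : List ℤ} (hM : M ∈ calls L) : M ⊆ L := by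
  induction L using quicksort_induction generalizing M with
  | nil => exact absurd hM (not_mem_calls_nil M)
  | cons h t ih₁ ih₂ =>
    rcases mem_calls_cons.1 hM with rfl | hM | hM
    · exact List.Subset.refl _
    · exact fun x hx => List.mem_cons_of_mem h (List.mem_of_mem_filter (ih₁ hM hx))
    · exact fun x hx => List.mem_cons_of_mem h (List.mem_of_mem_filter (ih₂ hM hx))

theorem head_mem_of_mem_calls {L M : List ℤ} {p : ℤ} (hM : M ∈ calls L)
    (hp : M.head? = some p) : p ∈ L :=
  subset_of_mem_calls hM (List.mem_of_mem_head? hp)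

theorem pred_head_of_mem_calls_filter {P : ℤ → Bool} {L M : List ℤ} {p : ℤ}
    (hM : M ∈ calls (L.filter P)) (hMp : M.head? = some p) : P p :=
  (List.mem_filter.1 (head_mem_of_mem_calls hM hMp)).2

theorem eq_of_mem_calls_of_head?_eq {L M N : List ℤ} {p : ℤ} (hM : M ∈ calls L)
    (hN : N ∈ calls L) (hMp : M.head? = some p) (hNp : N.head? = some p) : M = N := by
  induction L using quicksort_induction generalizing M N with
  | nil => exact absurd hM (not_mem_calls_nil M)
  | cons h t ih₁ ih₂ =>
    have locate : ∀ {K}, K ∈ calls (h :: t) → K.head? = some p →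
        (K = h :: t ∧ p = h) ∨ (K ∈ calls (t.filter (· < h)) ∧ p < h) ∨
          (K ∈ calls (t.filter (h < ·)) ∧ h < p) := by
      intro K hK hKp
      rcases mem_calls_cons.1 hK with rfl | hK | hK
      · exact .inl ⟨rfl, (Option.some.inj hKp).symm⟩
      · exact .inr (.inl ⟨hK, by simpa using pred_head_of_mem_calls_filter hK hKp⟩)
      · exact .inr (.inr ⟨hK, by simpa using pred_head_of_mem_calls_filter hK hKp⟩)
    rcases locate hM hMp with ⟨rfl, hp⟩ | ⟨hM, hph⟩ | ⟨hM, hhp⟩ <;>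
      rcases locate hN hNp with ⟨rfl, hp'⟩ | ⟨hN, hph'⟩ | ⟨hN, hhp'⟩
    all_goals first | rfl | omega | exact ih₁ hM hN hMp hNp | exact ih₂ hM hN hMp hNp

theorem exists_mem_calls_of_mem_calls_filter {P : ℤ → Bool} (hP : {x | P x}.OrdConnected)
    {K M' : List ℤ} (hM' : M' ∈ calls (K.filter P)) :
    ∃ M ∈ calls K, M.head? = M'.head? ∧ M' = M.filter P := by
  induction K using quicksort_induction generalizing M' with
  | nil => exact absurd hM' (not_mem_calls_nil M')
  | cons h t ih₁ ih₂ =>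
    have left {M'} (hM' : M' ∈ calls ((t.filter (· < h)).filter P)) :
        ∃ M ∈ calls (h :: t), M.head? = M'.head? ∧ M' = M.filter P :=
      let ⟨M, hM, hMM'⟩ := ih₁ hM'
      ⟨M, mem_calls_cons.2 (.inr (.inl hM)), hMM'⟩
    have right {M'} (hM' : M' ∈ calls ((t.filter (h < ·)).filter P)) :
        ∃ M ∈ calls (h :: t), M.head? = M'.head? ∧ M' = M.filter P :=
      let ⟨M, hM, hMM'⟩ := ih₂ hM'
      ⟨M, mem_calls_cons.2 (.inr (.inr hM)), hMM'⟩
    by_cases hh : P h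
    · rw [List.filter_cons_of_pos hh] at hM'
      rcases mem_calls_cons.1 hM' with rfl | hM' | hM'
      · exact ⟨h :: t, mem_calls_cons.2 (.inl rfl), rfl, (List.filter_cons_of_pos hh).symm⟩
      · exact left (by rwa [List.filter_comm] at hM')
      · exact right (by rwa [List.filter_comm] at hM')
    · rw [List.filter_cons_of_neg hh] at hM'
      -- `P` holds on one side of `h` only, so filtering by `P` passes through one child of `h`.
      rcases hP.subset_Iio_or_subset_Ioi (h := h) hh with hlt | hgt
      · rw [← List.filter_filter_of_imp _ (fun x hx => decide_eq_true (hlt hx))] at hM'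
        exact left hM'
      · rw [← List.filter_filter_of_imp _ (fun x hx => decide_eq_true (hgt hx))] at hM'
        exact right hM'

theorem eq_filter_of_mem_calls_filter {P : ℤ → Bool} (hP : {x | P x}.OrdConnected)
    {L M M' : List ℤ} {p : ℤ} (hM : M ∈ calls L) (hM' : M' ∈ calls (L.filter P))
    (hMp : M.head? = some p) (hM'p : M'.head? = some p) : M' = M.filter P := by
  obtain ⟨N, hN, hNM', rfl⟩ := exists_mem_calls_of_mem_calls_filter hP hM'
  rw [eq_of_mem_calls_of_head?_eq hM hN hMp (hNM'.trans hM'p)]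

theorem stmt2_general (L : List ℤ) (a : ℤ)
    (p : ℤ) (M M' : List ℤ)
    (hM : M ∈ calls L) (hM' : M' ∈ calls (a :: L))
    (hMp : M.head? = some p) (hM'p : M'.head? = some p) :
    (p < a → M.tail.filter (· < p) = M'.tail.filter (· < p)) ∧
    (a < p → M.tail.filter (p < ·) = M'.tail.filter (p < ·)) := by
  rcases mem_calls_cons.1 hM' with rfl | hM' | hM'
  · obtain rfl : a = p := by simpa using hM'p
    simp
  · have hpa : p < a := by simpa using pred_head_of_mem_calls_filter hM' hM'p
    have hM'_eq : M' = M.filter (· < a) := eq_filter_of_mem_calls_filter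
      (by simp only [decide_eq_true_eq]; exact Set.ordConnected_Iio) hM hM' hMp hM'p
    refine ⟨fun _ => ?_, fun hap => absurd hpa hap.asymm⟩
    rw [hM'_eq, List.filter_tail_filter_of_head?_eq hMp (by simpa)
      (by simp only [decide_eq_true_eq]; exact fun x hx => hx.trans hpa)]
  · have hap : a < p := by simpa using pred_head_of_mem_calls_filter hM' hM'p
    have hM'_eq : M' = M.filter (a < ·) := eq_filter_of_mem_calls_filter
      (by simp only [decide_eq_true_eq]; exact Set.ordConnected_Ioi) hM hM' hMp hM'p
    refine ⟨fun hpa => absurd hpa hap.asymm, fun _ => ?_⟩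
    rw [hM'_eq, List.filter_tail_filter_of_head?_eq hMp (by simpa)
      (by simp only [decide_eq_true_eq]; exact fun x hx => hap.trans hx)]

/-- For `L' = a :: L` with `a` fresh: for any pivot `p < a` occurring in both
recursion trees, the input of the left-child call of `p` (the filtered list of
keys smaller than `p`) is the same in `Q(L)` and `Q(L')`; symmetrically for
`p > a` and right children. -/
theorem stmt2 (L : List ℤ) (a : ℤ) (ha : a ∉ L) (hnd : (a :: L).Nodup)
    (p : ℤ) (M M' : List ℤ)
    (hM : M ∈ calls L) (hM' : M' ∈ calls (a :: L))
    (hMp : M.head? = some p) (hM'p : M'.head? = some p) :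
    (p < a → M.tail.filter (· < p) = M'.tail.filter (· < p)) ∧
    (a < p → M.tail.filter (p < ·) = M'.tail.filter (p < ·)) :=
  stmt2_general L a p M M' hM hM' hMp hM'p
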